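/- Let c ∈ SL₃(ℂ), and consider the ℂ-linear functionals on the 6-dimensional space 𝔟₃ of upper-triangular 3×3 complex matrices X (with diagonal entries x₁₁, x₂₂, x₃₃) given by f₁(X) = (c⁻¹Xc)₂₁, f₂(X) = (c⁻¹(X − x₂₂·1)c)₂₂, and h₂(X) = (c⁻¹(X − x₁₁·1))₃₂. Then: (a) if c is upper triangular, the functionals f₁, f₂, h₂ vanish identically on 𝔟₃; (b) if c is not upper triangular, the solution space {X ∈ 𝔟₃ : f₁(X) = f₂(X) = h₂(X) = 0} is a ℂ-linear subspace of dimension exactly 4, i.e. of codimension 2 in 𝔟₃. -/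

import Mathlib

/-- The Borel subalgebra `𝔟₃` of upper-triangular `3 × 3` complex matrices, as a submodule
of the space of all matrices. -/
noncomputable def borel3 : Submodule ℂ (Matrix (Fin 3) (Fin 3) ℂ) where
  carrier := {X | ∀ i j, j < i → X i j = 0}
  add_mem' := by
    intro a b ha hb i j h
    show a i j + b i j = 0
    rw [ha i j h, hb i j h, add_zero]
  zero_mem' := fun _ _ _ => rfl
  smul_mem' := by
    intro t a ha i j h
    show t * a i j = 0
    rw [ha i j h, mul_zero]

/-- `f₁(X) = (c⁻¹Xc)₂₁`. -/
noncomputable def f1 (c X : Matrix (Fin 3) (Fin 3) ℂ) : ℂ := (c⁻¹ * X * c) 1 0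

/-- `f₂(X) = (c⁻¹(X − x₂₂·1)c)₂₂`. -/
noncomputable def f2 (c X : Matrix (Fin 3) (Fin 3) ℂ) : ℂ :=
  (c⁻¹ * (X - X 1 1 • (1 : Matrix (Fin 3) (Fin 3) ℂ)) * c) 1 1

/-- `h₂(X) = (c⁻¹(X − x₁₁·1))₃₂`. -/
noncomputable def h2 (c X : Matrix (Fin 3) (Fin 3) ℂ) : ℂ :=
  (c⁻¹ * (X - X 0 0 • (1 : Matrix (Fin 3) (Fin 3) ℂ))) 2 1

/-!
If `c` is upper triangular then so is `c⁻¹`, and `f₁, f₂, h₂` read off entries of products of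
upper-triangular matrices lying below the diagonal, or (for `f₂`) on the diagonal, where
`X - x₂₂ • 1` vanishes.

Otherwise, on `𝔟₃` the functionals satisfy `c 2 1 • f₁ - c 2 0 • f₂ = c⁻¹ 1 0 • h₂`, so two of
them cut out the fiber: `f₁, h₂` if `c 2 0 ≠ 0`, `f₂, h₂` if `c 2 1 ≠ 0`, and `f₁, f₂` if
`c 2 0 = c 2 1 = 0`, in which case the last row of `c⁻¹` is also supported on the diagonal and
`h₂` vanishes on `𝔟₃`. The two chosen functionals are independent on `𝔟₃`, as witnessed by
upper-triangular matrices of the form `c * E`, on which `c⁻¹ * _ * c` is simply `E * c`.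
Hence the fiber has dimension `6 - 2 = 4`.
-/

local notation "Mat3" => Matrix (Fin 3) (Fin 3) ℂ

theorem Matrix.IsUpperTriangular.mul_apply_self {n R : Type*} [Fintype n] [LinearOrder n]
    [NonUnitalNonAssocSemiring R] {A B : Matrix n n R} (hA : A.IsUpperTriangular)
    (hB : B.IsUpperTriangular) (i : n) : (A * B) i i = A i i * B i i := by
  refine Finset.sum_eq_single i (fun k _ hki => ?_) (by simp)
  change A i k * B k i = 0
  rcases hki.lt_or_gt with hk | hk
  · rw [hA hk, zero_mul]
  · rw [hB hk, mul_zero]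

theorem Matrix.inv_apply_eq_zero_of_apply_eq_zero {n R : Type*} [Fintype n] [DecidableEq n]
    [CommRing R] {c : Matrix n n R} (hc : IsUnit c.det) {i : n} (h : ∀ j ≠ i, c i j = 0) :
    ∀ j ≠ i, c⁻¹ i j = 0 := by
  have hrow (j : n) : c i i * c⁻¹ i j = (1 : Matrix n n R) i j := by
    rw [← Matrix.mul_nonsing_inv c hc, Matrix.mul_apply,
      Finset.sum_eq_single i (fun k _ hk => by rw [h k hk, zero_mul]) (by simp)]
  have hii : IsUnit (c i i) := IsUnit.of_mul_eq_one _ (by simpa using hrow i)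
  intro j hj
  simpa [Matrix.one_apply_ne hj.symm, hii.mul_right_eq_zero] using hrow j

theorem LinearMap.prod_surjective_of_det_ne_zero {K V : Type*} [Field K] [AddCommGroup V]
    [Module K V] (L M : V →ₗ[K] K) {x y : V} (hdet : L x * M y - L y * M x ≠ 0) :
    Function.Surjective (L.prod M) := by
  rintro ⟨p, q⟩
  set D := L x * M y - L y * M x
  refine ⟨((p * M y - q * L y) / D) • x + ((q * L x - p * M x) / D) • y, ?_⟩
  simp only [prod_apply, Function.prod, map_add, map_smul, smul_eq_mul, Prod.smul_mk,
    Prod.mk_add_mk, Prod.mk.injEq]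
  constructor <;> field_simp <;> ring

theorem Submodule.finrank_inf_ker_inf_ker_add_two {K V : Type*} [Field K] [AddCommGroup V]
    [Module K V] (W : Submodule K V) [FiniteDimensional K W] (L M : V →ₗ[K] K) {x y : V}
    (hx : x ∈ W) (hy : y ∈ W) (hdet : L x * M y - L y * M x ≠ 0) :
    Module.finrank K ↥(W ⊓ (LinearMap.ker L ⊓ LinearMap.ker M)) + 2 = Module.finrank K W := by
  set φ := (L.domRestrict W).prod (M.domRestrict W)
  have hφ : Function.Surjective φ :=
    LinearMap.prod_surjective_of_det_ne_zero _ _ (x := ⟨x, hx⟩) (y := ⟨y, hy⟩) hdet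
  have hker : (LinearMap.ker φ).map W.subtype = W ⊓ (LinearMap.ker L ⊓ LinearMap.ker M) := by
    rw [LinearMap.ker_prod, LinearMap.ker_domRestrict, LinearMap.ker_domRestrict,
      ← Submodule.comap_inf, Submodule.map_comap_subtype]
  have := LinearMap.finrank_range_add_finrank_ker φ
  rw [LinearMap.range_eq_top.mpr hφ, finrank_top, Module.finrank_prod, Module.finrank_self,
    ← Submodule.finrank_map_subtype_eq, hker] at this
  omega

theorem mem_borel3_iff {X : Mat3} : X ∈ borel3 ↔ X 1 0 = 0 ∧ X 2 0 = 0 ∧ X 2 1 = 0 := by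
  refine ⟨fun h => ⟨h 1 0 (by decide), h 2 0 (by decide), h 2 1 (by decide)⟩, ?_⟩
  rintro ⟨h10, h20, h21⟩ i j hji
  fin_cases i <;> fin_cases j <;> first | assumption | exact absurd hji (by decide)

theorem mem_borel3_iff_isUpperTriangular {X : Mat3} : X ∈ borel3 ↔ X.IsUpperTriangular :=
  ⟨fun h _ _ => h _ _, fun h _ _ hji => h hji⟩

theorem finrank_borel3 : Module.finrank ℂ borel3 = 6 := by
  let lower : Mat3 →ₗ[ℂ] ({p : Fin 3 × Fin 3 // p.2 < p.1} → ℂ) :=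
    { toFun X p := X p.1.1 p.1.2, map_add' _ _ := rfl, map_smul' _ _ := rfl }
  have hker : LinearMap.ker lower = borel3 := by
    ext X
    simp only [LinearMap.mem_ker, funext_iff]
    exact ⟨fun h i j hji => h ⟨(i, j), hji⟩, fun h p => h _ _ p.2⟩
  have hsurj : Function.Surjective lower := fun v =>
    ⟨Matrix.of fun i j => if h : j < i then v ⟨(i, j), h⟩ else 0, funext fun p => dif_pos p.2⟩
  have := LinearMap.finrank_range_add_finrank_ker lower
  rw [LinearMap.range_eq_top.mpr hsurj, finrank_top, hker, Module.finrank_fintype_fun_eq_card,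
    Module.finrank_matrix, Module.finrank_self, Fintype.card_fin] at this
  have hcard : Fintype.card {p : Fin 3 × Fin 3 // p.2 < p.1} = 3 := rfl
  omega

@[simps]
noncomputable def f1Lin (c : Mat3) : Mat3 →ₗ[ℂ] ℂ where
  toFun := f1 c
  map_add' X Y := by simp [f1, Matrix.mul_add, Matrix.add_mul]
  map_smul' t X := by simp [f1]

@[simps]
noncomputable def f2Lin (c : Mat3) : Mat3 →ₗ[ℂ] ℂ where
  toFun := f2 c
  map_add' X Y := by simp [f2, add_smul, add_sub_add_comm, Matrix.mul_add, Matrix.add_mul]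
  map_smul' t X := by
    simp only [f2, RingHom.id_apply, smul_eq_mul]
    rw [Matrix.smul_apply, smul_eq_mul, mul_smul, ← smul_sub, Matrix.mul_smul, Matrix.smul_mul]
    rfl

@[simps]
noncomputable def h2Lin (c : Mat3) : Mat3 →ₗ[ℂ] ℂ where
  toFun := h2 c
  map_add' X Y := by simp [h2, add_smul, add_sub_add_comm, Matrix.mul_add]
  map_smul' t X := by
    simp only [h2, RingHom.id_apply, smul_eq_mul]
    rw [Matrix.smul_apply, smul_eq_mul, mul_smul, ← smul_sub, Matrix.mul_smul]
    rfl

section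
variable {c : Mat3}

theorem f1_f2_h2_eq_zero_of_mem_borel3 (hc : IsUnit c.det) (hcB : c ∈ borel3) {X : Mat3}
    (hX : X ∈ borel3) : f1 c X = 0 ∧ f2 c X = 0 ∧ h2 c X = 0 := by
  rw [mem_borel3_iff_isUpperTriangular] at hcB hX
  have : Invertible c := Matrix.invertibleOfIsUnitDet c hc
  have hci : c⁻¹.IsUpperTriangular := Matrix.blockTriangular_inv_of_blockTriangular hcB
  have hsub (i : Fin 3) : (X - X i i • (1 : Mat3)).IsUpperTriangular := fun a b hba => by
    simp [hX hba, Matrix.one_apply_ne (ne_of_gt hba : a ≠ b)]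
  refine ⟨(hci.mul hX).mul hcB (by decide : (0 : Fin 3) < 1), ?_,
    hci.mul (hsub 0) (by decide : (1 : Fin 3) < 2)⟩
  rw [f2, Matrix.IsUpperTriangular.mul_apply_self (hci.mul (hsub 1)) hcB,
    Matrix.IsUpperTriangular.mul_apply_self hci (hsub 1)]
  simp

theorem f1_f2_h2_relation (hc : c.det = 1) {X : Mat3} (hX : X ∈ borel3) :
    c 2 1 * f1 c X - c 2 0 * f2 c X = c⁻¹ 1 0 * h2 c X := by
  obtain ⟨h10, h20, h21⟩ := mem_borel3_iff.mp hX
  simp only [f1, f2, h2, Matrix.inv_def, hc, Ring.inverse_one, one_smul, Matrix.adjugate_fin_three,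
    Matrix.mul_apply, Fin.sum_univ_three, Matrix.sub_apply, Matrix.smul_apply, Matrix.one_apply,
    Matrix.of_apply, Matrix.cons_val', Matrix.cons_val_zero, Matrix.cons_val_one,
    Matrix.cons_val_two, Matrix.head_cons, Matrix.tail_cons, Matrix.empty_val',
    Matrix.cons_val_fin_one, Matrix.head_fin_const, smul_eq_mul, Fin.reduceEq, ↓reduceIte,
    mul_one, mul_zero, h10, h20, h21]
  ring

theorem h2_eq_of_mem_borel3 {X : Mat3} (hX : X ∈ borel3) :
    h2 c X = c⁻¹ 2 0 * X 0 1 + c⁻¹ 2 1 * (X 1 1 - X 0 0) := by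
  simp [h2, Matrix.mul_apply, Fin.sum_univ_three, Matrix.one_apply, hX 2 1 (by decide)]

theorem f1_mul_left (hc : IsUnit c.det) (E : Mat3) : f1 c (c * E) = (E * c) 1 0 := by
  rw [f1, ← Matrix.mul_assoc, Matrix.nonsing_inv_mul c hc, Matrix.one_mul]

theorem f2_mul_left (hc : IsUnit c.det) (E : Mat3) :
    f2 c (c * E) = (E * c) 1 1 - (c * E) 1 1 := by
  rw [f2, Matrix.mul_sub, Matrix.sub_mul, ← Matrix.mul_assoc, Matrix.nonsing_inv_mul c hc,
    Matrix.one_mul, Matrix.mul_smul, Matrix.mul_one, Matrix.smul_mul,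
    Matrix.nonsing_inv_mul c hc]
  simp

theorem h2_mul_left (hc : IsUnit c.det) (E : Mat3) :
    h2 c (c * E) = E 2 1 - (c * E) 0 0 * c⁻¹ 2 1 := by
  rw [h2, Matrix.mul_sub, ← Matrix.mul_assoc, Matrix.nonsing_inv_mul c hc, Matrix.one_mul,
    Matrix.mul_smul, Matrix.mul_one]
  simp

variable (c) in
noncomputable def zFiber : Submodule ℂ Mat3 :=
  borel3 ⊓ (LinearMap.ker (f1Lin c) ⊓ LinearMap.ker (f2Lin c) ⊓ LinearMap.ker (h2Lin c))

variable (c) in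
theorem coe_zFiber :
    (zFiber c : Set Mat3) = {X | X ∈ borel3 ∧ f1 c X = 0 ∧ f2 c X = 0 ∧ h2 c X = 0} := by
  ext X
  simp [zFiber, and_assoc]

theorem finrank_zFiber_of_pair (L M : Mat3 →ₗ[ℂ] ℂ)
    (hLM : ∀ X ∈ borel3, L X = 0 ∧ M X = 0 ↔ f1 c X = 0 ∧ f2 c X = 0 ∧ h2 c X = 0)
    {x y : Mat3} (hx : x ∈ borel3) (hy : y ∈ borel3) (hdet : L x * M y - L y * M x ≠ 0) :
    Module.finrank ℂ (zFiber c) = 4 := by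
  have hfiber : zFiber c = borel3 ⊓ (LinearMap.ker L ⊓ LinearMap.ker M) := by
    ext X
    rw [← SetLike.mem_coe, coe_zFiber]
    simp only [Set.mem_ofPred_eq, Submodule.mem_inf, LinearMap.mem_ker]
    exact ⟨fun ⟨hX, h⟩ => ⟨hX, (hLM X hX).mpr h⟩, fun ⟨hX, h⟩ => ⟨hX, (hLM X hX).mp h⟩⟩
  have := Submodule.finrank_inf_ker_inf_ker_add_two borel3 L M hx hy hdet
  rw [← hfiber, finrank_borel3] at this
  omega

theorem exists_mem_borel3_h2_ne_zero (hc : IsUnit c.det) (h : c 2 0 ≠ 0 ∨ c 2 1 ≠ 0) :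
    ∃ y ∈ borel3, h2 c y ≠ 0 := by
  by_contra! hy
  have hinv : ∀ j ≠ 2, c⁻¹ 2 j = 0 := by
    intro j hj
    have hmem : Matrix.single j 1 (1 : ℂ) ∈ borel3 :=
      mem_borel3_iff.mpr (by fin_cases j <;> simp_all)
    have := hy _ hmem
    rw [h2_eq_of_mem_borel3 hmem] at this
    fin_cases j <;> simp_all
  have := Matrix.inv_apply_eq_zero_of_apply_eq_zero (Matrix.isUnit_nonsing_inv_det c hc) hinv
  rw [Matrix.nonsing_inv_nonsing_inv c hc] at this
  exact h.elim (· (this 0 (by decide))) (· (this 1 (by decide)))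

theorem finrank_zFiber_of_apply_two_zero_ne_zero (hc : c.det = 1) (h20 : c 2 0 ≠ 0) :
    Module.finrank ℂ (zFiber c) = 4 := by
  have hu : IsUnit c.det := hc ▸ isUnit_one
  obtain ⟨y, hy, hy2⟩ := exists_mem_borel3_h2_ne_zero hu (.inl h20)
  refine finrank_zFiber_of_pair (f1Lin c) (h2Lin c) (fun X hX => ?_)
    (x := c * Matrix.single 1 2 1) (mem_borel3_iff.mpr (by simp)) hy ?_
  · simp only [f1Lin_apply, h2Lin_apply]
    refine ⟨fun ⟨h1, h3⟩ => ⟨h1, ?_, h3⟩, fun ⟨h1, _, h3⟩ => ⟨h1, h3⟩⟩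
    simpa [h1, h3, h20] using f1_f2_h2_relation hc hX
  · simp [f1_mul_left hu, h2_mul_left hu, h20, hy2]

theorem finrank_zFiber_of_apply_two_one_ne_zero (hc : c.det = 1) (h21 : c 2 1 ≠ 0) :
    Module.finrank ℂ (zFiber c) = 4 := by
  have hu : IsUnit c.det := hc ▸ isUnit_one
  obtain ⟨y, hy, hy2⟩ := exists_mem_borel3_h2_ne_zero hu (.inr h21)
  refine finrank_zFiber_of_pair (f2Lin c) (h2Lin c) (fun X hX => ?_)
    (x := c * Matrix.single 1 2 1) (mem_borel3_iff.mpr (by simp)) hy ?_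
  · simp only [f2Lin_apply, h2Lin_apply]
    refine ⟨fun ⟨h2, h3⟩ => ⟨?_, h2, h3⟩, fun ⟨_, h2, h3⟩ => ⟨h2, h3⟩⟩
    simpa [h2, h3, h21] using f1_f2_h2_relation hc hX
  · simp [f2_mul_left hu, h2_mul_left hu, h21, hy2]

theorem finrank_zFiber_of_apply_two_eq_zero (hc : IsUnit c.det) (h10 : c 1 0 ≠ 0)
    (h20 : c 2 0 = 0) (h21 : c 2 1 = 0) : Module.finrank ℂ (zFiber c) = 4 := by
  have hinv := Matrix.inv_apply_eq_zero_of_apply_eq_zero hc (i := 2)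
    (by intro j hj; fin_cases j <;> simp_all)
  refine finrank_zFiber_of_pair (f1Lin c) (f2Lin c) (fun X hX => ?_)
    (x := c * Matrix.single 0 1 1) (y := c * Matrix.single 1 1 1)
    (mem_borel3_iff.mpr (by simp [h20])) (mem_borel3_iff.mpr (by simp [h21])) ?_
  · have h3 : h2 c X = 0 := by
      simp [h2_eq_of_mem_borel3 hX, hinv 0 (by decide), hinv 1 (by decide)]
    simp [h3]
  · simp [f1_mul_left hc, f2_mul_left hc, h10]

theorem finrank_zFiber (hc : c.det = 1) (hcB : c ∉ borel3) : Module.finrank ℂ (zFiber c) = 4 := by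
  by_cases h20 : c 2 0 = 0
  · by_cases h21 : c 2 1 = 0
    · have h10 : c 1 0 ≠ 0 := fun h10 => hcB (mem_borel3_iff.mpr ⟨h10, h20, h21⟩)
      exact finrank_zFiber_of_apply_two_eq_zero (hc ▸ isUnit_one) h10 h20 h21
    · exact finrank_zFiber_of_apply_two_one_ne_zero hc h21
  · exact finrank_zFiber_of_apply_two_zero_ne_zero hc h20

end

/-- **Fibers of the projection of the variety `Z ⊂ 𝔟₃ × SL₃` to `SL₃`:**
(a) if `c` is upper triangular, the functionals `f₁, f₂, h₂` vanish identically on `𝔟₃`;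
(b) otherwise the solution space `{X ∈ 𝔟₃ : f₁(X) = f₂(X) = h₂(X) = 0}` is a ℂ-linear
subspace of dimension exactly `4` (codimension `2` in the 6-dimensional space `𝔟₃`). -/
theorem fibers_of_Z_over_SL3 (c : Matrix (Fin 3) (Fin 3) ℂ) (hc : c.det = 1) :
    ((∀ i j : Fin 3, j < i → c i j = 0) →
      ∀ X ∈ borel3, f1 c X = 0 ∧ f2 c X = 0 ∧ h2 c X = 0) ∧
    (¬ (∀ i j : Fin 3, j < i → c i j = 0) →
      ∃ S : Submodule ℂ (Matrix (Fin 3) (Fin 3) ℂ),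
        (S : Set (Matrix (Fin 3) (Fin 3) ℂ))
            = {X | X ∈ borel3 ∧ f1 c X = 0 ∧ f2 c X = 0 ∧ h2 c X = 0} ∧
        Module.finrank ℂ S = 4) :=
  ⟨fun hcB _ hX => f1_f2_h2_eq_zero_of_mem_borel3 (hc ▸ isUnit_one) hcB hX,
    fun hcB => ⟨zFiber c, coe_zFiber c, finrank_zFiber hc hcB⟩⟩
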